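/- arXiv:0802.2408 — 4 statements merged into one kernel-verified Lean document; each statement's English description precedes it below -/
import Mathlib

section
/- (One-dimensional Gagliardo–Nirenberg inequality.) For every real p > 1 there exists a constant C(p) > 0 such that for every continuously differentiable function v : ℝ → ℝ with ∫_ℝ v(x)² dx < ∞ and ∫_ℝ v'(x)² dx < ∞, one has ∫_ℝ |v(x)|^{p+1} dx ≤ C(p) · ( ∫_ℝ v(x)² dx )^{(p+3)/4} · ( ∫_ℝ v'(x)² dx )^{(p−1)/4}. -/
/-!
Since `v²` and its derivative `2 v v'` are integrable, `v²` tends to `0` at `-∞`, so the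
fundamental theorem of calculus on `(-∞, x]` and Cauchy–Schwarz give the sup bound
`v(x)² ≤ 2 ∫ |v v'| ≤ 2 ‖v‖₂ ‖v'‖₂`. Integrating `|v|^(p+1) ≤ ‖v‖∞^(p-1) v²` then yields the
inequality with `C = 2^((p-1)/2)`.
-/

open MeasureTheory Filter Topology

theorem norm_le_integral_norm_of_hasDerivAt {E : Type*} [NormedAddCommGroup E] [NormedSpace ℝ E]
    [CompleteSpace E] {f f' : ℝ → E} (hderiv : ∀ x, HasDerivAt f (f' x) x) (hf : Integrable f)
    (hf' : Integrable f') (x : ℝ) : ‖f x‖ ≤ ∫ y, ‖f' y‖ := by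
  have hlim : Tendsto f atBot (𝓝 0) :=
    tendsto_zero_of_hasDerivAt_of_integrableOn_Iic (a := x) (fun y _ ↦ hderiv y)
      hf'.integrableOn hf.integrableOn
  rw [← sub_zero (f x),
    ← integral_Iic_of_hasDerivAt_of_tendsto' (fun y _ ↦ hderiv y) hf'.integrableOn hlim]
  exact (norm_integral_le_integral_norm _).trans
    (setIntegral_le_integral hf'.norm (.of_forall fun _ ↦ norm_nonneg _))

theorem integral_abs_mul_le_sqrt_mul_sqrt {α : Type*} [MeasurableSpace α] {μ : Measure α}
    {f g : α → ℝ} (hf : MemLp f 2 μ) (hg : MemLp g 2 μ) :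
    ∫ a, |f a * g a| ∂μ ≤ √(∫ a, f a ^ 2 ∂μ) * √(∫ a, g a ^ 2 ∂μ) := by
  have h := integral_mul_norm_le_Lp_mul_Lq Real.HolderConjugate.two_two
    (by simpa using hf) (by simpa using hg)
  simp only [Real.norm_eq_abs, ← abs_mul] at h
  simpa only [Real.rpow_two, sq_abs, ← Real.sqrt_eq_rpow] using h

theorem sq_le_two_mul_sqrt_integral_sq_mul_sqrt_integral_deriv_sq {v : ℝ → ℝ}
    (hv : Differentiable ℝ v) (hv2 : Integrable (fun x ↦ v x ^ 2))
    (hv'2 : Integrable (fun x ↦ deriv v x ^ 2)) (x : ℝ) :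
    v x ^ 2 ≤ 2 * √(∫ y, v y ^ 2) * √(∫ y, deriv v y ^ 2) := by
  have hvL2 : MemLp v 2 := (memLp_two_iff_integrable_sq hv.continuous.aestronglyMeasurable).2 hv2
  have hv'L2 : MemLp (deriv v) 2 :=
    (memLp_two_iff_integrable_sq (measurable_deriv v).aestronglyMeasurable).2 hv'2
  have hderiv : ∀ y, HasDerivAt (fun y ↦ v y ^ 2) (2 * (v y * deriv v y)) y := fun y ↦
    ((hv y).hasDerivAt.fun_pow 2).congr_deriv (by ring)
  have hbound := norm_le_integral_norm_of_hasDerivAt hderiv hv2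
    ((hvL2.integrable_mul hv'L2).const_mul 2) x
  simp only [Real.norm_eq_abs, abs_mul, abs_two, integral_const_mul, abs_sq] at hbound
  have := integral_abs_mul_le_sqrt_mul_sqrt hvL2 hv'L2
  simp only [abs_mul] at this
  linarith

theorem integral_abs_rpow_le_of_abs_le {α : Type*} [MeasurableSpace α] {μ : Measure α}
    {f : α → ℝ} {K p : ℝ} (hp : 1 ≤ p) (hf2 : Integrable (fun x ↦ f x ^ 2) μ)
    (hK : ∀ x, |f x| ≤ K) :
    ∫ x, |f x| ^ (p + 1) ∂μ ≤ K ^ (p - 1) * ∫ x, f x ^ 2 ∂μ := by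
  rw [← integral_const_mul]
  refine integral_mono_of_nonneg (.of_forall fun x ↦ by positivity) (hf2.const_mul _)
    (.of_forall fun x ↦ ?_)
  calc |f x| ^ (p + 1) = |f x| ^ (p - 1) * f x ^ 2 := by
        rw [← sq_abs, ← Real.rpow_natCast,
          ← Real.rpow_add' (abs_nonneg _) (by push_cast; linarith)]
        ring_nf
    _ ≤ K ^ (p - 1) * f x ^ 2 := by
        gcongr
        exact hK x

/-- One-dimensional Gagliardo–Nirenberg inequality: for `p > 1`,
`∫ |v|^{p+1} ≤ C(p) (∫ v²)^{(p+3)/4} (∫ (v')²)^{(p-1)/4}`. -/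
theorem gagliardo_nirenberg_one_dim (p : ℝ) (hp : 1 < p) :
    ∃ C : ℝ, 0 < C ∧
      ∀ v : ℝ → ℝ, ContDiff ℝ 1 v →
        Integrable (fun x => v x ^ 2) → Integrable (fun x => deriv v x ^ 2) →
        (∫ x : ℝ, |v x| ^ (p + 1)) ≤
          C * (∫ x : ℝ, v x ^ 2) ^ ((p + 3) / 4) * (∫ x : ℝ, deriv v x ^ 2) ^ ((p - 1) / 4) := by
  refine ⟨2 ^ ((p - 1) / 2), by positivity, fun v hv hv2 hv'2 ↦ ?_⟩
  set A := ∫ x, v x ^ 2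
  set B := ∫ x, deriv v x ^ 2
  have hA : 0 ≤ A := integral_nonneg fun x ↦ sq_nonneg _
  have hB : 0 ≤ B := integral_nonneg fun x ↦ sq_nonneg _
  have hsup (x : ℝ) : |v x| ≤ √(2 * √A * √B) := Real.abs_le_sqrt <|
    sq_le_two_mul_sqrt_integral_sq_mul_sqrt_integral_deriv_sq (hv.differentiable one_ne_zero)
      hv2 hv'2 x
  calc ∫ x, |v x| ^ (p + 1) ≤ √(2 * √A * √B) ^ (p - 1) * A :=
        integral_abs_rpow_le_of_abs_le hp.le hv2 hsup
    _ = 2 ^ ((p - 1) / 2) * A ^ ((p + 3) / 4) * B ^ ((p - 1) / 4) := by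
        rw [show (p + 3) / 4 = (p - 1) / 4 + 1 by ring, Real.rpow_add' hA (by linarith),
          Real.rpow_one, Real.sqrt_eq_rpow, ← Real.rpow_mul (by positivity),
          Real.mul_rpow (by positivity) (by positivity),
          Real.mul_rpow (by positivity) (by positivity), Real.sqrt_eq_rpow A,
          Real.sqrt_eq_rpow B, ← Real.rpow_mul hA, ← Real.rpow_mul hB]
        ring_nf
end

section
/- (Lax pair commutator collapse for KdV.) Let u : ℝ → ℝ be smooth, and define the operators L and P acting on smooth functions f : ℝ → ℝ by L f := f'' + u·f and P f := f''' + (3/4)( (u·f)' + u·f' ). Then for every smooth f : ℝ → ℝ and every x ∈ ℝ, P(L f)(x) − L(P f)(x) = (1/4)( u'''(x) + 6 u(x) u'(x) ) · f(x). In other words, the commutator [P, L], a priori a fourth-order operator, collapses to multiplication by (1/4)(u''' + 6 u u'). -/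
private lemma derivAdd (g h : ℝ → ℝ) (hg : Differentiable ℝ g) (hh : Differentiable ℝ h) :
    deriv (fun y => g y + h y) = fun y => deriv g y + deriv h y :=
  funext fun y => deriv_add (hg y) (hh y)

private lemma derivMul (g h : ℝ → ℝ) (hg : Differentiable ℝ g) (hh : Differentiable ℝ h) :
    deriv (fun y => g y * h y) = fun y => deriv g y * h y + g y * deriv h y :=
  funext fun y => deriv_mul (hg y) (hh y)


/-- The Schrödinger-type Lax operator `L = d²/dx² + u` (with `u` acting by
multiplication). -/
noncomputable def LaxL (u f : ℝ → ℝ) : ℝ → ℝ :=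
  fun x => iteratedDeriv 2 f x + u x * f x

/-- The Lax operator `P = d³/dx³ + (3/4)((d/dx)∘u + u∘(d/dx))`. -/
noncomputable def LaxP (u f : ℝ → ℝ) : ℝ → ℝ :=
  fun x => iteratedDeriv 3 f x + (3 / 4) * (deriv (fun y => u y * f y) x + u x * deriv f x)

/-- Lax pair commutator collapse for KdV: for smooth `u` and `f`,
`[P, L] f = PLf - LPf = (1/4)(u''' + 6 u u') · f`, i.e. the a priori fourth-order
commutator is just multiplication by `(1/4)(u''' + 6uu')`. -/
theorem lax_pair_commutator_collapse (u : ℝ → ℝ) (hu : ContDiff ℝ (⊤ : ℕ∞) u)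
    (f : ℝ → ℝ) (hf : ContDiff ℝ (⊤ : ℕ∞) f) (x : ℝ) :
    LaxP u (LaxL u f) x - LaxL u (LaxP u f) x =
      (1 / 4) * (iteratedDeriv 3 u x + 6 * u x * deriv u x) * f x := by
  have hu' : ContDiff ℝ ((⊤ : ℕ∞) : WithTop ℕ∞) u := hu.of_le (by simp)
  have hf' : ContDiff ℝ ((⊤ : ℕ∞) : WithTop ℕ∞) f := hf.of_le (by simp)
  have hud : ∀ n : ℕ, Differentiable ℝ (deriv^[n] u) := fun n =>
    (hu'.iterate_deriv n).differentiable (by simp)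
  have hfd : ∀ n : ℕ, Differentiable ℝ (deriv^[n] f) := fun n =>
    (hf'.iterate_deriv n).differentiable (by simp)
  have h0u := hud 0; have h1u := hud 1; have h2u := hud 2; have h3u := hud 3
  have h0f := hfd 0; have h1f := hfd 1; have h2f := hfd 2; have h3f := hfd 3
  have h4f := hfd 4; have h5f := hfd 5
  simp only [Function.iterate_succ, Function.iterate_zero, Function.comp_apply,
    Function.comp_def, id_eq] at h0u h1u h2u h3u h0f h1f h2f h3f h4f h5f
  have hL : LaxL u f = fun y => deriv (deriv f) y + u y * f y := by
    funext y; simp [LaxL, iteratedDeriv_succ, iteratedDeriv_zero]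
  have hP : LaxP u f = fun y =>
      deriv (deriv (deriv f)) y + (3 / 4) * (deriv (fun z => u z * f z) y + u y * deriv f y) := by
    funext y; simp [LaxP, iteratedDeriv_succ, iteratedDeriv_zero]
  simp only [LaxL, LaxP, hL, hP, iteratedDeriv_succ, iteratedDeriv_zero]
  simp (disch := fun_prop) only [derivAdd, derivMul, deriv_const_mul_field]
  ring
end

section
/- (Virial identity for the Airy equation.) Let u : ℝ × ℝ → ℝ be a smooth solution of the Airy equation ∂ₜu + ∂ₓ³u = 0 with uniform rapid decay, and let x : ℝ → ℝ be differentiable. Then for every t ∈ ℝ, (d/dt) ∫_ℝ (y − x(t)) u(t,y)² dy = −3 ∫_ℝ (∂_y u(t,y))² dy − x'(t) ∫_ℝ u(t,y)² dy. In particular (taking x(t) ≡ 0), the virial quantity ∫_ℝ y·u(t,y)² dy is nonincreasing in time, with (d/dt) ∫_ℝ y u(t,y)² dy = −3 ∫_ℝ (∂_y u(t,y))² dy. -/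
open MeasureTheory Filter Topology Set

section Helpers

lemma airy_decay_le {C v y : ℝ} (h : (1 + |y|) ^ 2 * |v| ≤ C) : |v| ≤ C / (1 + y ^ 2) := by
  have h1 : (0:ℝ) < 1 + y ^ 2 := by positivity
  have h2 : 1 + y ^ 2 ≤ (1 + |y|) ^ 2 := by nlinarith [abs_nonneg y, sq_abs y]
  rw [le_div_iff₀ h1]
  calc |v| * (1 + y ^ 2) ≤ |v| * (1 + |y|) ^ 2 :=
        mul_le_mul_of_nonneg_left h2 (abs_nonneg v)
    _ = (1 + |y|) ^ 2 * |v| := by ring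
    _ ≤ C := h

lemma airy_integrable_bound {C : ℝ} : Integrable (fun y : ℝ => C / (1 + y ^ 2)) := by
  simpa [div_eq_mul_inv] using integrable_inv_one_add_sq.const_mul C

lemma airy_decay_integrable {f : ℝ → ℝ} (hf : Continuous f) {C : ℝ}
    (h : ∀ y, (1 + |y|) ^ 2 * |f y| ≤ C) : Integrable f := by
  refine Integrable.mono' (g := fun y : ℝ => C / (1 + y ^ 2)) airy_integrable_bound
    hf.aestronglyMeasurable ?_
  filter_upwards with y
  simpa [Real.norm_eq_abs] using airy_decay_le (h y)

lemma airy_decay_tendsto_top {f : ℝ → ℝ} {C : ℝ} (h : ∀ y, (1 + |y|) * |f y| ≤ C) :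
    Tendsto f atTop (𝓝 0) := by
  have hb : ∀ y, ‖f y‖ ≤ C / (1 + |y|) := by
    intro y
    have h1 : (0:ℝ) < 1 + |y| := by positivity
    rw [Real.norm_eq_abs, le_div_iff₀ h1]
    calc |f y| * (1 + |y|) = (1 + |y|) * |f y| := by ring
      _ ≤ C := h y
  exact squeeze_zero_norm hb <| tendsto_const_nhds.div_atTop
    (tendsto_atTop_add_const_left _ 1 tendsto_abs_atTop_atTop)

lemma airy_decay_tendsto_bot {f : ℝ → ℝ} {C : ℝ} (h : ∀ y, (1 + |y|) * |f y| ≤ C) :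
    Tendsto f atBot (𝓝 0) := by
  have hb : ∀ y, ‖f y‖ ≤ C / (1 + |y|) := by
    intro y
    have h1 : (0:ℝ) < 1 + |y| := by positivity
    rw [Real.norm_eq_abs, le_div_iff₀ h1]
    calc |f y| * (1 + |y|) = (1 + |y|) * |f y| := by ring
      _ ≤ C := h y
  exact squeeze_zero_norm hb <| tendsto_const_nhds.div_atTop
    (tendsto_atTop_add_const_left _ 1 tendsto_abs_atBot_atTop)

lemma airy_integral_deriv_zero {h h' : ℝ → ℝ} (hd : ∀ y, HasDerivAt h (h' y) y)
    (hint : Integrable h') (htop : Tendsto h atTop (𝓝 0)) (hbot : Tendsto h atBot (𝓝 0)) :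
    ∫ y, h' y = 0 := by
  have h1 : ∫ y in Iic (0:ℝ), h' y = h 0 - 0 :=
    integral_Iic_of_hasDerivAt_of_tendsto' (fun y _ => hd y) hint.integrableOn hbot
  have h2 : ∫ y in Ioi (0:ℝ), h' y = 0 - h 0 :=
    integral_Ioi_of_hasDerivAt_of_tendsto' (fun y _ => hd y) hint.integrableOn htop
  rw [← intervalIntegral.integral_Iic_add_Ioi hint.integrableOn hint.integrableOn, h1, h2]
  ring

end Helpers

/-- `u` is a smooth solution of the Airy equation `∂ₜu + ∂ₓ³u = 0` with uniform
rapid decay on compact time intervals. -/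
def IsAirySolution (u : ℝ → ℝ → ℝ) : Prop :=
  ContDiff ℝ (⊤ : ℕ∞) (fun q : ℝ × ℝ => u q.1 q.2) ∧
  (∀ t x : ℝ, deriv (fun s => u s x) t + iteratedDeriv 3 (fun y => u t y) x = 0) ∧
  (∀ I : Set ℝ, IsCompact I → ∀ j k N : ℕ, ∃ M : ℝ,
      ∀ t ∈ I, ∀ x : ℝ,
        (1 + |x|) ^ N *
          |iteratedDeriv j (fun s => iteratedDeriv k (fun y => u s y) x) t| ≤ M)

/-- Virial identity for the Airy equation: for any differentiable recentring `x(t)`,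
`(d/dt) ∫ (y - x(t)) u(t,y)² dy = -3 ∫ (∂_y u)² dy - x'(t) ∫ u² dy`; in particular
(taking `x ≡ 0`) the virial quantity `∫ y u(t,y)² dy` is nonincreasing, with
derivative `-3 ∫ (∂_y u)² dy`. -/
theorem airy_virial_identity (u : ℝ → ℝ → ℝ) (hu : IsAirySolution u)
    (x : ℝ → ℝ) (hx : Differentiable ℝ x) :
    (∀ t : ℝ, HasDerivAt (fun s => ∫ y : ℝ, (y - x s) * u s y ^ 2)
        (-3 * (∫ y : ℝ, deriv (u t) y ^ 2) - deriv x t * ∫ y : ℝ, u t y ^ 2) t) ∧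
    (∀ t : ℝ, HasDerivAt (fun s => ∫ y : ℝ, y * u s y ^ 2)
        (-3 * ∫ y : ℝ, deriv (u t) y ^ 2) t) ∧
    Antitone (fun t => ∫ y : ℝ, y * u t y ^ 2) := by
  obtain ⟨hsmooth0, hpde, hdecay⟩ := hu
  have hsmooth : ContDiff ℝ ((⊤ : ℕ∞) : WithTop ℕ∞) (fun q : ℝ × ℝ => u q.1 q.2) :=
    hsmooth0.of_le (by simp)
  have hg : ∀ t : ℝ, ContDiff ℝ ((⊤ : ℕ∞) : WithTop ℕ∞) (u t) := fun t =>
    hsmooth.comp (contDiff_const.prodMk contDiff_id)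
  have hgk : ∀ (t : ℝ) (k : ℕ), ContDiff ℝ ((⊤ : ℕ∞) : WithTop ℕ∞) (iteratedDeriv k (u t)) := by
    intro t k
    rw [iteratedDeriv_eq_iterate]
    exact (hg t).iterate_deriv k
  have hder : ∀ (s : ℝ) (k : ℕ) (y : ℝ),
      HasDerivAt (iteratedDeriv k (u s)) (iteratedDeriv (k + 1) (u s) y) y := by
    intro s k y
    rw [iteratedDeriv_succ]
    exact (((hgk s k).differentiable (by simp)) y).hasDerivAt
  have hder1 : ∀ (s y : ℝ), HasDerivAt (u s) (iteratedDeriv 1 (u s) y) y := by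
    intro s y
    have h := hder s 0 y
    rwa [iteratedDeriv_zero] at h
  have hts : ∀ (s y : ℝ), HasDerivAt (fun s' => u s' y) (-(iteratedDeriv 3 (u s) y)) s := by
    intro s y
    have hc : ContDiff ℝ ((⊤ : ℕ∞) : WithTop ℕ∞) (fun s' : ℝ => u s' y) :=
      hsmooth.comp (contDiff_id.prodMk contDiff_const)
    have h1 := (hc.differentiable (by simp) s).hasDerivAt
    have h2 := hpde s y
    have h3 : deriv (fun s' => u s' y) s = -(iteratedDeriv 3 (u s) y) := by linarith
    rwa [h3] at h1
  have hB : ∀ (t : ℝ) (k N : ℕ), ∃ M, 0 ≤ M ∧ ∀ s ∈ Metric.closedBall t 1, ∀ y : ℝ,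
      (1 + |y|) ^ N * |iteratedDeriv k (u s) y| ≤ M := by
    intro t k N
    obtain ⟨M, hM⟩ := hdecay (Metric.closedBall t 1) (isCompact_closedBall t 1) 0 k N
    refine ⟨max M 0, le_max_right _ _, fun s hs y => ?_⟩
    have h := hM s hs y
    simp only [iteratedDeriv_zero] at h
    exact le_trans h (le_max_left _ _)
  -- derivative of the key combination 2 u u'' - (u')^2
  have hA : ∀ (s y : ℝ), HasDerivAt
      (fun y => 2 * u s y * iteratedDeriv 2 (u s) y - iteratedDeriv 1 (u s) y ^ 2)
      (2 * u s y * iteratedDeriv 3 (u s) y) y := by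
    intro s y
    have h1 := ((hder1 s y).const_mul 2).mul (hder s 2 y)
    have h2 := (hder s 1 y).pow 2
    have h3 := h1.sub h2
    have e : 2 * u s y * iteratedDeriv 3 (u s) y
        = 2 * iteratedDeriv 1 (u s) y * iteratedDeriv 2 (u s) y
            + 2 * u s y * iteratedDeriv 3 (u s) y
          - (2:ℕ) * iteratedDeriv 1 (u s) y ^ (2 - 1) * iteratedDeriv 2 (u s) y := by
      push_cast
      ring_nf
    rw [e]
    exact h3
  have hK1 : ∀ s : ℝ, ∫ y : ℝ, 2 * u s y * iteratedDeriv 3 (u s) y = 0 := by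
    intro s
    have hself : s ∈ Metric.closedBall s 1 := Metric.mem_closedBall_self zero_le_one
    obtain ⟨M02, h02n, h02⟩ := hB s 0 2
    obtain ⟨M12, h12n, h12⟩ := hB s 1 2
    obtain ⟨M10, h10n, h10⟩ := hB s 1 0
    obtain ⟨M20, h20n, h20⟩ := hB s 2 0
    obtain ⟨M30, h30n, h30⟩ := hB s 3 0
    simp only [iteratedDeriv_zero, pow_zero, one_mul] at h02 h12 h10 h20 h30
    apply airy_integral_deriv_zero (hA s)
    · -- integrability of 2 u u'''
      apply airy_decay_integrable (C := 2 * M02 * M30)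
        (by exact (continuous_const.mul (hg s).continuous).mul (hgk s 3).continuous)
      intro y
      have b1 := h02 s hself y
      have b2 := h30 s hself y
      have e : (1 + |y|) ^ 2 * |2 * u s y * iteratedDeriv 3 (u s) y|
          = 2 * ((1 + |y|) ^ 2 * |u s y|) * |iteratedDeriv 3 (u s) y| := by
        rw [abs_mul, abs_mul, abs_two]; ring
      rw [e]
      nlinarith [mul_le_mul b1 b2 (abs_nonneg _) h02n, abs_nonneg (u s y),
        abs_nonneg (iteratedDeriv 3 (u s) y)]
    · -- tendsto at +infty
      apply airy_decay_tendsto_top (C := 2 * M02 * M20 + M12 * M10)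
      intro y
      have b1 := h02 s hself y
      have b2 := h20 s hself y
      have b3 := h12 s hself y
      have b4 := h10 s hself y
      have hy1 : (1:ℝ) ≤ 1 + |y| := by linarith [abs_nonneg y]
      have t1 : |2 * u s y * iteratedDeriv 2 (u s) y - iteratedDeriv 1 (u s) y ^ 2|
          ≤ 2 * |u s y| * |iteratedDeriv 2 (u s) y| + |iteratedDeriv 1 (u s) y| ^ 2 := by
        calc |2 * u s y * iteratedDeriv 2 (u s) y - iteratedDeriv 1 (u s) y ^ 2|
            ≤ |2 * u s y * iteratedDeriv 2 (u s) y| + |iteratedDeriv 1 (u s) y ^ 2| :=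
              abs_sub _ _
          _ = 2 * |u s y| * |iteratedDeriv 2 (u s) y| + |iteratedDeriv 1 (u s) y| ^ 2 := by
              rw [abs_mul, abs_mul, abs_two, abs_pow]
      have hY0 : (0:ℝ) ≤ 2 * |u s y| * |iteratedDeriv 2 (u s) y|
          + |iteratedDeriv 1 (u s) y| ^ 2 := by positivity
      calc (1 + |y|) * |2 * u s y * iteratedDeriv 2 (u s) y - iteratedDeriv 1 (u s) y ^ 2|
          ≤ (1 + |y|) ^ 2 * (2 * |u s y| * |iteratedDeriv 2 (u s) y|
              + |iteratedDeriv 1 (u s) y| ^ 2) := by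
            nlinarith [mul_le_mul_of_nonneg_left t1 (by positivity : (0:ℝ) ≤ 1 + |y|),
              mul_nonneg (mul_nonneg (by positivity : (0:ℝ) ≤ 1 + |y|)
                (sub_nonneg.mpr hy1)) hY0]
        _ = 2 * ((1 + |y|) ^ 2 * |u s y|) * |iteratedDeriv 2 (u s) y|
            + ((1 + |y|) ^ 2 * |iteratedDeriv 1 (u s) y|) * |iteratedDeriv 1 (u s) y| := by
            ring
        _ ≤ 2 * M02 * M20 + M12 * M10 := by
            nlinarith [mul_le_mul b1 b2 (abs_nonneg _) h02n,
              mul_le_mul b3 b4 (abs_nonneg _) h12n]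
    · -- tendsto at -infty
      apply airy_decay_tendsto_bot (C := 2 * M02 * M20 + M12 * M10)
      intro y
      have b1 := h02 s hself y
      have b2 := h20 s hself y
      have b3 := h12 s hself y
      have b4 := h10 s hself y
      have hy1 : (1:ℝ) ≤ 1 + |y| := by linarith [abs_nonneg y]
      have t1 : |2 * u s y * iteratedDeriv 2 (u s) y - iteratedDeriv 1 (u s) y ^ 2|
          ≤ 2 * |u s y| * |iteratedDeriv 2 (u s) y| + |iteratedDeriv 1 (u s) y| ^ 2 := by
        calc |2 * u s y * iteratedDeriv 2 (u s) y - iteratedDeriv 1 (u s) y ^ 2|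
            ≤ |2 * u s y * iteratedDeriv 2 (u s) y| + |iteratedDeriv 1 (u s) y ^ 2| :=
              abs_sub _ _
          _ = 2 * |u s y| * |iteratedDeriv 2 (u s) y| + |iteratedDeriv 1 (u s) y| ^ 2 := by
              rw [abs_mul, abs_mul, abs_two, abs_pow]
      have hY0 : (0:ℝ) ≤ 2 * |u s y| * |iteratedDeriv 2 (u s) y|
          + |iteratedDeriv 1 (u s) y| ^ 2 := by positivity
      calc (1 + |y|) * |2 * u s y * iteratedDeriv 2 (u s) y - iteratedDeriv 1 (u s) y ^ 2|
          ≤ (1 + |y|) ^ 2 * (2 * |u s y| * |iteratedDeriv 2 (u s) y|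
              + |iteratedDeriv 1 (u s) y| ^ 2) := by
            nlinarith [mul_le_mul_of_nonneg_left t1 (by positivity : (0:ℝ) ≤ 1 + |y|),
              mul_nonneg (mul_nonneg (by positivity : (0:ℝ) ≤ 1 + |y|)
                (sub_nonneg.mpr hy1)) hY0]
        _ = 2 * ((1 + |y|) ^ 2 * |u s y|) * |iteratedDeriv 2 (u s) y|
            + ((1 + |y|) ^ 2 * |iteratedDeriv 1 (u s) y|) * |iteratedDeriv 1 (u s) y| := by
            ring
        _ ≤ 2 * M02 * M20 + M12 * M10 := by
            nlinarith [mul_le_mul b1 b2 (abs_nonneg _) h02n,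
              mul_le_mul b3 b4 (abs_nonneg _) h12n]
  have hK2 : ∀ s : ℝ, ∫ y : ℝ, y * (2 * u s y * iteratedDeriv 3 (u s) y)
      = 3 * ∫ y : ℝ, iteratedDeriv 1 (u s) y ^ 2 := by
    intro s
    have hself : s ∈ Metric.closedBall s 1 := Metric.mem_closedBall_self zero_le_one
    obtain ⟨M02, h02n, h02⟩ := hB s 0 2
    obtain ⟨M03, h03n, h03⟩ := hB s 0 3
    obtain ⟨M12, h12n, h12⟩ := hB s 1 2
    obtain ⟨M10, h10n, h10⟩ := hB s 1 0
    obtain ⟨M20, h20n, h20⟩ := hB s 2 0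
    obtain ⟨M30, h30n, h30⟩ := hB s 3 0
    simp only [iteratedDeriv_zero, pow_zero, one_mul] at h02 h03 h12 h10 h20 h30
    have b1 := fun y => h02 s hself y
    have b1' := fun y => h03 s hself y
    have b2 := fun y => h20 s hself y
    have b3 := fun y => h12 s hself y
    have b4 := fun y => h10 s hself y
    have b5 := fun y => h30 s hself y
    -- derivative of  y*(2uu'' - u'^2) - 2uu'
    have hd : ∀ y : ℝ, HasDerivAt
        (fun y => y * (2 * u s y * iteratedDeriv 2 (u s) y - iteratedDeriv 1 (u s) y ^ 2)
          - 2 * u s y * iteratedDeriv 1 (u s) y)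
        (y * (2 * u s y * iteratedDeriv 3 (u s) y) - 3 * iteratedDeriv 1 (u s) y ^ 2) y := by
      intro y
      have h1 := (hasDerivAt_id y).mul (hA s y)
      have h2 := ((hder1 s y).const_mul 2).mul (hder s 1 y)
      have h3 := h1.sub h2
      have e : y * (2 * u s y * iteratedDeriv 3 (u s) y) - 3 * iteratedDeriv 1 (u s) y ^ 2
          = (1 * (2 * u s y * iteratedDeriv 2 (u s) y - iteratedDeriv 1 (u s) y ^ 2)
              + id y * (2 * u s y * iteratedDeriv 3 (u s) y))
            - (2 * iteratedDeriv 1 (u s) y * iteratedDeriv 1 (u s) y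
              + 2 * u s y * iteratedDeriv 2 (u s) y) := by
        simp only [id]
        ring
      rw [e]
      exact h3
    have int1 : Integrable (fun y : ℝ => y * (2 * u s y * iteratedDeriv 3 (u s) y)) := by
      apply airy_decay_integrable (C := 2 * M03 * M30)
        (continuous_id.mul ((continuous_const.mul (hg s).continuous).mul (hgk s 3).continuous))
      intro y
      calc (1 + |y|) ^ 2 * |y * (2 * u s y * iteratedDeriv 3 (u s) y)|
          = ((1 + |y|) ^ 2 * |y|) * (2 * |u s y| * |iteratedDeriv 3 (u s) y|) := by
            rw [abs_mul, abs_mul, abs_mul, abs_two]; ring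
        _ ≤ ((1 + |y|) ^ 2 * (1 + |y|)) * (2 * |u s y| * |iteratedDeriv 3 (u s) y|) := by
            apply mul_le_mul_of_nonneg_right ?_ (by positivity)
            apply mul_le_mul_of_nonneg_left ?_ (by positivity)
            linarith [abs_nonneg y]
        _ = 2 * ((1 + |y|) ^ 3 * |u s y|) * |iteratedDeriv 3 (u s) y| := by ring
        _ ≤ 2 * M03 * M30 := by
            nlinarith [mul_le_mul (b1' y) (b5 y) (abs_nonneg _) h03n]
    have int2 : Integrable (fun y : ℝ => 3 * iteratedDeriv 1 (u s) y ^ 2) := by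
      apply airy_decay_integrable (C := 3 * M12 * M10)
        (continuous_const.mul ((hgk s 1).continuous.pow 2))
      intro y
      calc (1 + |y|) ^ 2 * |3 * iteratedDeriv 1 (u s) y ^ 2|
          = 3 * ((1 + |y|) ^ 2 * |iteratedDeriv 1 (u s) y|) * |iteratedDeriv 1 (u s) y| := by
            rw [abs_mul, abs_pow, abs_of_nonneg (by norm_num : (0:ℝ) ≤ 3)]; ring
        _ ≤ 3 * M12 * M10 := by
            nlinarith [mul_le_mul (b3 y) (b4 y) (abs_nonneg _) h12n]
    have hbnd : ∀ y : ℝ, (1 + |y|) *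
        |y * (2 * u s y * iteratedDeriv 2 (u s) y - iteratedDeriv 1 (u s) y ^ 2)
          - 2 * u s y * iteratedDeriv 1 (u s) y|
        ≤ 2 * M02 * M20 + M12 * M10 + 2 * M02 * M10 := by
      intro y
      have hy0 : (0:ℝ) ≤ 1 + |y| := by positivity
      have i1 : (1 + |y|) * |y| ≤ (1 + |y|) ^ 2 := by nlinarith [abs_nonneg y]
      have i2 : (1 + |y|) ≤ (1 + |y|) ^ 2 := by nlinarith [abs_nonneg y]
      have hA1 : |2 * u s y * iteratedDeriv 2 (u s) y - iteratedDeriv 1 (u s) y ^ 2|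
          ≤ 2 * |u s y| * |iteratedDeriv 2 (u s) y| + |iteratedDeriv 1 (u s) y| ^ 2 := by
        calc |2 * u s y * iteratedDeriv 2 (u s) y - iteratedDeriv 1 (u s) y ^ 2|
            ≤ |2 * u s y * iteratedDeriv 2 (u s) y| + |iteratedDeriv 1 (u s) y ^ 2| :=
              abs_sub _ _
          _ = 2 * |u s y| * |iteratedDeriv 2 (u s) y| + |iteratedDeriv 1 (u s) y| ^ 2 := by
              rw [abs_mul, abs_mul, abs_two, abs_pow]
      have habs : |y * (2 * u s y * iteratedDeriv 2 (u s) y - iteratedDeriv 1 (u s) y ^ 2)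
            - 2 * u s y * iteratedDeriv 1 (u s) y|
          ≤ |y| * (2 * |u s y| * |iteratedDeriv 2 (u s) y| + |iteratedDeriv 1 (u s) y| ^ 2)
            + 2 * |u s y| * |iteratedDeriv 1 (u s) y| := by
        calc |y * (2 * u s y * iteratedDeriv 2 (u s) y - iteratedDeriv 1 (u s) y ^ 2)
              - 2 * u s y * iteratedDeriv 1 (u s) y|
            ≤ |y * (2 * u s y * iteratedDeriv 2 (u s) y - iteratedDeriv 1 (u s) y ^ 2)|
              + |2 * u s y * iteratedDeriv 1 (u s) y| := abs_sub _ _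
          _ = |y| * |2 * u s y * iteratedDeriv 2 (u s) y - iteratedDeriv 1 (u s) y ^ 2|
              + 2 * |u s y| * |iteratedDeriv 1 (u s) y| := by
              rw [abs_mul, abs_mul, abs_mul, abs_two]
          _ ≤ |y| * (2 * |u s y| * |iteratedDeriv 2 (u s) y| + |iteratedDeriv 1 (u s) y| ^ 2)
              + 2 * |u s y| * |iteratedDeriv 1 (u s) y| := by
              have := mul_le_mul_of_nonneg_left hA1 (abs_nonneg y)
              linarith
      calc (1 + |y|) *
            |y * (2 * u s y * iteratedDeriv 2 (u s) y - iteratedDeriv 1 (u s) y ^ 2)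
              - 2 * u s y * iteratedDeriv 1 (u s) y|
          ≤ (1 + |y|) *
              (|y| * (2 * |u s y| * |iteratedDeriv 2 (u s) y| + |iteratedDeriv 1 (u s) y| ^ 2)
                + 2 * |u s y| * |iteratedDeriv 1 (u s) y|) :=
            mul_le_mul_of_nonneg_left habs hy0
        _ = ((1 + |y|) * |y|) *
              (2 * |u s y| * |iteratedDeriv 2 (u s) y| + |iteratedDeriv 1 (u s) y| ^ 2)
            + (1 + |y|) * (2 * |u s y| * |iteratedDeriv 1 (u s) y|) := by ring
        _ ≤ (1 + |y|) ^ 2 *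
              (2 * |u s y| * |iteratedDeriv 2 (u s) y| + |iteratedDeriv 1 (u s) y| ^ 2)
            + (1 + |y|) ^ 2 * (2 * |u s y| * |iteratedDeriv 1 (u s) y|) := by
            have j1 := mul_le_mul_of_nonneg_right i1
              (by positivity : (0:ℝ) ≤ 2 * |u s y| * |iteratedDeriv 2 (u s) y|
                + |iteratedDeriv 1 (u s) y| ^ 2)
            have j2 := mul_le_mul_of_nonneg_right i2
              (by positivity : (0:ℝ) ≤ 2 * |u s y| * |iteratedDeriv 1 (u s) y|)
            linarith
        _ = 2 * ((1 + |y|) ^ 2 * |u s y|) * |iteratedDeriv 2 (u s) y|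
            + ((1 + |y|) ^ 2 * |iteratedDeriv 1 (u s) y|) * |iteratedDeriv 1 (u s) y|
            + 2 * ((1 + |y|) ^ 2 * |u s y|) * |iteratedDeriv 1 (u s) y| := by ring
        _ ≤ 2 * M02 * M20 + M12 * M10 + 2 * M02 * M10 := by
            nlinarith [mul_le_mul (b1 y) (b2 y) (abs_nonneg _) h02n,
              mul_le_mul (b3 y) (b4 y) (abs_nonneg _) h12n,
              mul_le_mul (b1 y) (b4 y) (abs_nonneg _) h02n]
    have hzero : ∫ y : ℝ, (y * (2 * u s y * iteratedDeriv 3 (u s) y)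
        - 3 * iteratedDeriv 1 (u s) y ^ 2) = 0 :=
      airy_integral_deriv_zero hd (int1.sub int2)
        (airy_decay_tendsto_top hbnd) (airy_decay_tendsto_bot hbnd)
    rw [integral_sub int1 int2, integral_const_mul] at hzero
    linarith
  have hIu2 : ∀ s : ℝ, Integrable (fun y : ℝ => u s y ^ 2) := by
    intro s
    have hself : s ∈ Metric.closedBall s 1 := Metric.mem_closedBall_self zero_le_one
    obtain ⟨M02, h02n, h02⟩ := hB s 0 2
    obtain ⟨M00, h00n, h00⟩ := hB s 0 0
    simp only [iteratedDeriv_zero, pow_zero, one_mul] at h02 h00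
    apply airy_decay_integrable (C := M02 * M00) ((hg s).continuous.pow 2)
    intro y
    calc (1 + |y|) ^ 2 * |u s y ^ 2| = ((1 + |y|) ^ 2 * |u s y|) * |u s y| := by
          rw [abs_pow]; ring
      _ ≤ M02 * M00 := mul_le_mul (h02 s hself y) (h00 s hself y) (abs_nonneg _) h02n
  have hIyu2 : ∀ s : ℝ, Integrable (fun y : ℝ => y * u s y ^ 2) := by
    intro s
    have hself : s ∈ Metric.closedBall s 1 := Metric.mem_closedBall_self zero_le_one
    obtain ⟨M03, h03n, h03⟩ := hB s 0 3
    obtain ⟨M00, h00n, h00⟩ := hB s 0 0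
    simp only [iteratedDeriv_zero, pow_zero, one_mul] at h03 h00
    apply airy_decay_integrable (C := M03 * M00)
      (continuous_id.mul ((hg s).continuous.pow 2))
    intro y
    calc (1 + |y|) ^ 2 * |y * u s y ^ 2|
        = ((1 + |y|) ^ 2 * |y|) * (|u s y| * |u s y|) := by rw [abs_mul, abs_pow]; ring
      _ ≤ ((1 + |y|) ^ 2 * (1 + |y|)) * (|u s y| * |u s y|) := by
          apply mul_le_mul_of_nonneg_right ?_ (by positivity)
          apply mul_le_mul_of_nonneg_left ?_ (by positivity)
          linarith [abs_nonneg y]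
      _ = ((1 + |y|) ^ 3 * |u s y|) * |u s y| := by ring
      _ ≤ M03 * M00 := mul_le_mul (h03 s hself y) (h00 s hself y) (abs_nonneg _) h03n
  have lemH : ∀ t : ℝ, HasDerivAt (fun s => ∫ y : ℝ, u s y ^ 2) 0 t := by
    intro t
    obtain ⟨M02, h02n, h02⟩ := hB t 0 2
    obtain ⟨M30, h30n, h30⟩ := hB t 3 0
    simp only [iteratedDeriv_zero, pow_zero, one_mul] at h02 h30
    have hbound : ∀ᵐ y : ℝ, ∀ s ∈ Metric.ball t 1,
        ‖2 * u s y * -(iteratedDeriv 3 (u s) y)‖ ≤ (2 * M02 * M30) / (1 + y ^ 2) := by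
      refine Eventually.of_forall fun y s hs => ?_
      have hs' := Metric.ball_subset_closedBall hs
      rw [Real.norm_eq_abs]
      apply airy_decay_le
      calc (1 + |y|) ^ 2 * |2 * u s y * -(iteratedDeriv 3 (u s) y)|
          = 2 * ((1 + |y|) ^ 2 * |u s y|) * |iteratedDeriv 3 (u s) y| := by
            rw [abs_mul, abs_mul, abs_two, abs_neg]; ring
        _ ≤ 2 * M02 * M30 := by
            nlinarith [mul_le_mul (h02 s hs' y) (h30 s hs' y) (abs_nonneg _) h02n]
    have hdiff : ∀ᵐ y : ℝ, ∀ s ∈ Metric.ball t 1,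
        HasDerivAt (fun s' => u s' y ^ 2) (2 * u s y * -(iteratedDeriv 3 (u s) y)) s := by
      refine Eventually.of_forall fun y s hs => ?_
      have e : 2 * u s y * -(iteratedDeriv 3 (u s) y)
          = (2:ℕ) * u s y ^ (2 - 1) * -(iteratedDeriv 3 (u s) y) := by norm_num
      rw [e]
      exact (hts s y).pow 2
    have key := (hasDerivAt_integral_of_dominated_loc_of_deriv_le
      (F := fun s (y : ℝ) => u s y ^ 2)
      (F' := fun s (y : ℝ) => 2 * u s y * -(iteratedDeriv 3 (u s) y))
      (bound := fun y : ℝ => (2 * M02 * M30) / (1 + y ^ 2))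
      (Metric.ball_mem_nhds t one_pos)
      (Eventually.of_forall fun s => (((hg s).continuous).pow 2).aestronglyMeasurable)
      (hIu2 t)
      (((continuous_const.mul (hg t).continuous).mul
        ((hgk t 3).continuous.neg)).aestronglyMeasurable)
      hbound airy_integrable_bound hdiff).2
    have hval : ∫ y : ℝ, 2 * u t y * -(iteratedDeriv 3 (u t) y) = 0 := by
      have e : (fun y : ℝ => 2 * u t y * -(iteratedDeriv 3 (u t) y))
          = fun y : ℝ => -(2 * u t y * iteratedDeriv 3 (u t) y) := by funext y; ring
      rw [e, integral_neg, hK1 t, neg_zero]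
    rwa [hval] at key
  have lemG : ∀ t : ℝ, HasDerivAt (fun s => ∫ y : ℝ, y * u s y ^ 2)
      (-3 * ∫ y : ℝ, deriv (u t) y ^ 2) t := by
    intro t
    obtain ⟨M03, h03n, h03⟩ := hB t 0 3
    obtain ⟨M30, h30n, h30⟩ := hB t 3 0
    simp only [iteratedDeriv_zero, pow_zero, one_mul] at h03 h30
    have hbound : ∀ᵐ y : ℝ, ∀ s ∈ Metric.ball t 1,
        ‖y * (2 * u s y * -(iteratedDeriv 3 (u s) y))‖ ≤ (2 * M03 * M30) / (1 + y ^ 2) := by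
      refine Eventually.of_forall fun y s hs => ?_
      have hs' := Metric.ball_subset_closedBall hs
      rw [Real.norm_eq_abs]
      apply airy_decay_le
      calc (1 + |y|) ^ 2 * |y * (2 * u s y * -(iteratedDeriv 3 (u s) y))|
          = ((1 + |y|) ^ 2 * |y|) * (2 * |u s y| * |iteratedDeriv 3 (u s) y|) := by
            rw [abs_mul, abs_mul, abs_mul, abs_two, abs_neg]; ring
        _ ≤ ((1 + |y|) ^ 2 * (1 + |y|)) * (2 * |u s y| * |iteratedDeriv 3 (u s) y|) := by
            apply mul_le_mul_of_nonneg_right ?_ (by positivity)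
            apply mul_le_mul_of_nonneg_left ?_ (by positivity)
            linarith [abs_nonneg y]
        _ = 2 * ((1 + |y|) ^ 3 * |u s y|) * |iteratedDeriv 3 (u s) y| := by ring
        _ ≤ 2 * M03 * M30 := by
            nlinarith [mul_le_mul (h03 s hs' y) (h30 s hs' y) (abs_nonneg _) h03n]
    have hdiff : ∀ᵐ y : ℝ, ∀ s ∈ Metric.ball t 1,
        HasDerivAt (fun s' => y * u s' y ^ 2)
          (y * (2 * u s y * -(iteratedDeriv 3 (u s) y))) s := by
      refine Eventually.of_forall fun y s hs => ?_
      have e : y * (2 * u s y * -(iteratedDeriv 3 (u s) y))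
          = y * ((2:ℕ) * u s y ^ (2 - 1) * -(iteratedDeriv 3 (u s) y)) := by norm_num
      rw [e]
      exact ((hts s y).pow 2).const_mul y
    have key := (hasDerivAt_integral_of_dominated_loc_of_deriv_le
      (F := fun s (y : ℝ) => y * u s y ^ 2)
      (F' := fun s (y : ℝ) => y * (2 * u s y * -(iteratedDeriv 3 (u s) y)))
      (bound := fun y : ℝ => (2 * M03 * M30) / (1 + y ^ 2))
      (Metric.ball_mem_nhds t one_pos)
      (Eventually.of_forall fun s =>
        (continuous_id.mul ((hg s).continuous.pow 2)).aestronglyMeasurable)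
      (hIyu2 t)
      ((continuous_id.mul ((continuous_const.mul (hg t).continuous).mul
        ((hgk t 3).continuous.neg))).aestronglyMeasurable)
      hbound airy_integrable_bound hdiff).2
    have hval : ∫ y : ℝ, y * (2 * u t y * -(iteratedDeriv 3 (u t) y))
        = -3 * ∫ y : ℝ, deriv (u t) y ^ 2 := by
      have e : (fun y : ℝ => y * (2 * u t y * -(iteratedDeriv 3 (u t) y)))
          = fun y : ℝ => -(y * (2 * u t y * iteratedDeriv 3 (u t) y)) := by funext y; ring
      rw [e, integral_neg, hK2 t]
      simp only [iteratedDeriv_one]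
      ring
    rwa [hval] at key
  refine ⟨?_, lemG, ?_⟩
  · -- general recentring
    intro t
    have hfeq : (fun s => ∫ y : ℝ, (y - x s) * u s y ^ 2)
        = fun s => (∫ y : ℝ, y * u s y ^ 2) - x s * ∫ y : ℝ, u s y ^ 2 := by
      funext s
      have e : (fun y : ℝ => (y - x s) * u s y ^ 2)
          = fun y : ℝ => y * u s y ^ 2 - x s * u s y ^ 2 := by funext y; ring
      rw [e, integral_sub (hIyu2 s) ((hIu2 s).const_mul (x s)), integral_const_mul]
    rw [hfeq]
    have hmul := (hx t).hasDerivAt.mul (lemH t)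
    have hsub := (lemG t).sub hmul
    have e2 : -3 * (∫ y : ℝ, deriv (u t) y ^ 2) - deriv x t * ∫ y : ℝ, u t y ^ 2
        = (-3 * ∫ y : ℝ, deriv (u t) y ^ 2)
          - (deriv x t * (∫ y : ℝ, u t y ^ 2) + x t * 0) := by ring
    rw [e2]
    exact hsub
  · -- antitonicity
    apply antitone_of_deriv_nonpos
    · exact fun t => (lemG t).differentiableAt
    · intro t
      rw [(lemG t).deriv]
      have h0 : 0 ≤ ∫ y : ℝ, deriv (u t) y ^ 2 := integral_nonneg fun y => sq_nonneg _
      linarith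
end

section
/- (Dispersive decay at rate t^{−1/3} for the Airy equation.) There exists a constant C > 0 such that for every Schwartz function u₀ : ℝ → ℂ and every t > 0, the solution of the Airy equation given by the Fourier representation u(t,x) := ∫_ℝ û₀(ξ) e^{i(tξ³ + xξ)} dξ, where û₀(ξ) := (1/2π) ∫_ℝ u₀(y) e^{−iyξ} dy, satisfies sup_{x ∈ ℝ} |u(t,x)| ≤ C t^{−1/3} ∫_ℝ |u₀(y)| dy. -/
/-!
By Fubini, the solution is the convolution of `u₀` with the truncated Airy kernel
`∫ ξ in -R..R, exp (i (t ξ³ + a ξ))`, up to the factor `1 / 2π`, so it suffices to bound this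
kernel by `10 t^{-1/3}` uniformly in `a` and `R`, and then let `R → ∞`. Rescaling `ξ = t^{-1/3} s`
reduces the kernel bound to `t = 1`, and the phase is odd, so only `∫ s in 0..R` matters. There the
phase speed `3 s² + a` is increasing, and it is at least `3` in absolute value outside a window of
length `2`: van der Corput's first-derivative test bounds the integral outside the window, the
trivial bound inside it.
-/

open MeasureTheory Complex ComplexConjugate Set Filter intervalIntegral

theorem integral_div_sq_le_of_hasDerivAt {f f' : ℝ → ℝ} {c d ρ : ℝ} (hcd : c ≤ d) (hρ : 0 < ρ)
    (hf : ∀ x ∈ Icc c d, HasDerivAt f (f' x) x) (hf' : ContinuousOn f' (Icc c d))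
    (hρf : ∀ x ∈ Icc c d, ρ ≤ |f x|) :
    ∫ x in c..d, f' x / f x ^ 2 ≤ 2 / ρ := by
  have hf0 : ∀ x ∈ Icc c d, f x ≠ 0 := fun x hx h => by
    have := hρf x hx; rw [h, abs_zero] at this; linarith
  have hfc : ContinuousOn f (Icc c d) := fun x hx => (hf x hx).continuousAt.continuousWithinAt
  have hftc : ∫ x in c..d, f' x / f x ^ 2 = (f c)⁻¹ - (f d)⁻¹ := by
    rw [← uIcc_of_le hcd] at hf hf' hf0 hfc
    rw [integral_eq_sub_of_hasDerivAt (f := fun x => -(f x)⁻¹) (f' := fun x => f' x / f x ^ 2)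
      (fun x hx => ((hf x hx).inv (hf0 x hx)).neg.congr_deriv (by ring))
      (hf'.div (hfc.pow 2) fun x hx => pow_ne_zero 2 (hf0 x hx)).intervalIntegrable]
    ring
  have hinv : ∀ x ∈ Icc c d, |(f x)⁻¹| ≤ ρ⁻¹ := fun x hx => by
    rw [abs_inv]; exact inv_anti₀ hρ (hρf x hx)
  have := hinv c (left_mem_Icc.2 hcd)
  have := hinv d (right_mem_Icc.2 hcd)
  rw [hftc, div_eq_mul_inv]
  linarith [le_abs_self (f c)⁻¹, neg_le_abs (f d)⁻¹]

theorem integral_cexp_mul_I_eq_boundary_add_integral {φ φ' φ'' : ℝ → ℝ} {c d : ℝ} (hcd : c ≤ d)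
    (hφ : ∀ x ∈ Icc c d, HasDerivAt φ (φ' x) x) (hφ' : ∀ x ∈ Icc c d, HasDerivAt φ' (φ'' x) x)
    (hφ''c : ContinuousOn φ'' (Icc c d)) (hφ'0 : ∀ x ∈ Icc c d, φ' x ≠ 0) :
    ∫ x in c..d, cexp (φ x * I) =
      (cexp (φ d * I) / (φ' d * I) - cexp (φ c * I) / (φ' c * I)) +
        ∫ x in c..d, cexp (φ x * I) * (φ'' x * I) / (φ' x * I) ^ 2 := by
  rw [← uIcc_of_le hcd] at hφ hφ' hφ''c hφ'0
  have hφc : ContinuousOn φ (uIcc c d) := fun x hx => (hφ x hx).continuousAt.continuousWithinAt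
  have hφ'c : ContinuousOn φ' (uIcc c d) := fun x hx => (hφ' x hx).continuousAt.continuousWithinAt
  have hw0 : ∀ x ∈ uIcc c d, (φ' x : ℂ) * I ≠ 0 :=
    fun x hx => mul_ne_zero (ofReal_ne_zero.2 (hφ'0 x hx)) I_ne_zero
  set E : ℝ → ℂ := fun x => cexp (φ x * I)
  set r : ℝ → ℂ := fun x => E x * (φ'' x * I) / (φ' x * I) ^ 2
  have hderiv : ∀ x ∈ uIcc c d, HasDerivAt (fun x => E x / (φ' x * I)) (E x - r x) x := by
    intro x hx
    have hE : HasDerivAt E (E x * (φ' x * I)) x := ((hφ x hx).ofReal_comp.mul_const I).cexp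
    refine (hE.div ((hφ' x hx).ofReal_comp.mul_const I) (hw0 x hx)).congr_deriv ?_
    have := ofReal_ne_zero.2 (hφ'0 x hx)
    simp only [r]
    field_simp
  have hEc : ContinuousOn E (uIcc c d) := by fun_prop
  have hrc : ContinuousOn r (uIcc c d) :=
    ContinuousOn.div (by fun_prop) (by fun_prop) fun x hx => pow_ne_zero 2 (hw0 x hx)
  rw [← integral_eq_sub_of_hasDerivAt hderiv (hEc.sub hrc).intervalIntegrable,
    integral_sub hEc.intervalIntegrable hrc.intervalIntegrable, sub_add_cancel]

/-- Van der Corput's first-derivative test, for a monotone phase speed `φ'`. -/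
theorem norm_integral_cexp_mul_I_le_of_le_abs_deriv {φ φ' φ'' : ℝ → ℝ} {c d ρ : ℝ}
    (hcd : c ≤ d) (hρ : 0 < ρ)
    (hφ : ∀ x ∈ Icc c d, HasDerivAt φ (φ' x) x) (hφ' : ∀ x ∈ Icc c d, HasDerivAt φ' (φ'' x) x)
    (hφ''c : ContinuousOn φ'' (Icc c d)) (hφ''n : ∀ x ∈ Icc c d, 0 ≤ φ'' x)
    (hρφ' : ∀ x ∈ Ioo c d, ρ ≤ |φ' x|) :
    ‖∫ x in c..d, cexp (φ x * I)‖ ≤ 4 / ρ := by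
  rcases hcd.eq_or_lt with rfl | hlt
  · rw [integral_same, norm_zero]; positivity
  have hρφ' : ∀ x ∈ Icc c d, ρ ≤ |φ' x| := by
    have hφ'c : ContinuousOn φ' (Icc c d) :=
      fun x hx => (hφ' x hx).continuousAt.continuousWithinAt
    rw [← closure_Ioo hlt.ne] at hφ'c ⊢
    exact le_on_closure hρφ' continuousOn_const (continuous_abs.comp_continuousOn hφ'c)
  have hφ'0 : ∀ x ∈ Icc c d, φ' x ≠ 0 := fun x hx h => by
    have := hρφ' x hx; rw [h, abs_zero] at this; linarith
  have hboundary : ∀ x ∈ Icc c d, ‖cexp (φ x * I) / (φ' x * I)‖ ≤ 1 / ρ := fun x hx => by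
    simp only [norm_div, norm_mul, norm_exp_ofReal_mul_I, norm_real, norm_I, mul_one,
      Real.norm_eq_abs]
    exact one_div_le_one_div_of_le hρ (hρφ' x hx)
  have hremainder : EqOn (fun x => ‖cexp (φ x * I) * (φ'' x * I) / (φ' x * I) ^ 2‖)
      (fun x => φ'' x / φ' x ^ 2) (uIcc c d) := fun x hx => by
    rw [uIcc_of_le hcd] at hx
    simp only [norm_div, norm_mul, norm_pow, norm_exp_ofReal_mul_I, norm_real, norm_I,
      mul_one, one_mul, Real.norm_eq_abs, sq_abs, abs_of_nonneg (hφ''n x hx)]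
  rw [integral_cexp_mul_I_eq_boundary_add_integral hcd hφ hφ' hφ''c hφ'0]
  calc _ ≤ (1 / ρ + 1 / ρ) + ∫ x in c..d, φ'' x / φ' x ^ 2 := by
        refine (norm_add_le _ _).trans (add_le_add ((norm_sub_le _ _).trans (add_le_add
          (hboundary d (right_mem_Icc.2 hcd)) (hboundary c (left_mem_Icc.2 hcd)))) ?_)
        exact (intervalIntegral.norm_integral_le_integral_norm hcd).trans_eq (integral_congr hremainder)
    _ ≤ (1 / ρ + 1 / ρ) + 2 / ρ := by
        gcongr; exact integral_div_sq_le_of_hasDerivAt hcd hρ hφ' hφ''c hρφ'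
    _ = 4 / ρ := by ring

theorem norm_integral_cexp_mul_I_le_of_le_abs_deriv_outside {φ φ' φ'' : ℝ → ℝ} {c d p q ρ : ℝ}
    (hcd : c ≤ d) (hpq : p ≤ q) (hρ : 0 < ρ)
    (hφ : ∀ x ∈ Icc c d, HasDerivAt φ (φ' x) x) (hφ' : ∀ x ∈ Icc c d, HasDerivAt φ' (φ'' x) x)
    (hφ''c : ContinuousOn φ'' (Icc c d)) (hφ''n : ∀ x ∈ Icc c d, 0 ≤ φ'' x)
    (hρφ' : ∀ x ∈ Icc c d, x ∉ Ioo p q → ρ ≤ |φ' x|) :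
    ‖∫ x in c..d, cexp (φ x * I)‖ ≤ 8 / ρ + (q - p) := by
  set p' := max c (min p d)
  set q' := max c (min q d)
  have hp' : p' ∈ Icc c d := ⟨le_max_left _ _, by grind⟩
  have hq' : q' ∈ Icc c d := ⟨le_max_left _ _, by grind⟩
  have hφc : ContinuousOn φ (Icc c d) := fun x hx => (hφ x hx).continuousAt.continuousWithinAt
  have hEc : ContinuousOn (fun x => cexp (φ x * I)) (Icc c d) := by fun_prop
  have hint : ∀ u ∈ Icc c d, ∀ v ∈ Icc c d,
      IntervalIntegrable (fun x => cexp (φ x * I)) volume u v :=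
    fun u hu v hv => (hEc.mono (uIcc_subset_Icc hu hv)).intervalIntegrable
  have houter : ∀ u ∈ Icc c d, ∀ v ∈ Icc c d, u ≤ v → (∀ x ∈ Ioo u v, x ∉ Ioo p q) →
      ‖∫ x in u..v, cexp (φ x * I)‖ ≤ 4 / ρ := fun u hu v hv huv hout => by
    have hsub : Icc u v ⊆ Icc c d := Icc_subset_Icc hu.1 hv.2
    exact norm_integral_cexp_mul_I_le_of_le_abs_deriv huv hρ (fun x hx => hφ x (hsub hx))
      (fun x hx => hφ' x (hsub hx)) (hφ''c.mono hsub) (fun x hx => hφ''n x (hsub hx))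
      fun x hx => hρφ' x (hsub (Ioo_subset_Icc_self hx)) (hout x hx)
  have hleft := houter c (left_mem_Icc.2 hcd) p' hp' hp'.1 fun x hx hx' => by grind
  have hright := houter q' hq' d (right_mem_Icc.2 hcd) hq'.2 fun x hx hx' => by grind
  have hmid : ‖∫ x in p'..q', cexp (φ x * I)‖ ≤ q - p := by
    refine (norm_integral_le_of_norm_le_const fun x _ =>
      (norm_exp_ofReal_mul_I (φ x)).le).trans ?_
    rw [one_mul, abs_le]
    constructor <;> grind
  rw [← integral_add_adjacent_intervals (hint c (left_mem_Icc.2 hcd) p' hp')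
      (hint p' hp' d (right_mem_Icc.2 hcd)),
    ← integral_add_adjacent_intervals (hint p' hp' q' hq') (hint q' hq' d (right_mem_Icc.2 hcd))]
  calc _ ≤ 4 / ρ + ((q - p) + 4 / ρ) :=
        (norm_add_le _ _).trans (add_le_add hleft ((norm_add_le _ _).trans (add_le_add hmid hright)))
    _ = 8 / ρ + (q - p) := by ring

theorem integral_cexp_mul_I_of_odd {φ : ℝ → ℝ} (hφ : Continuous φ) (hodd : ∀ x, φ (-x) = -φ x)
    (R : ℝ) :
    ∫ x in -R..R, cexp (φ x * I) =
      conj (∫ x in 0..R, cexp (φ x * I)) + ∫ x in 0..R, cexp (φ x * I) := by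
  have hint : ∀ u v : ℝ, IntervalIntegrable (fun x => cexp (φ x * I)) volume u v :=
    fun u v => (by fun_prop : Continuous fun x => cexp (φ x * I)).intervalIntegrable u v
  rw [← integral_add_adjacent_intervals (hint (-R) 0) (hint 0 R), ← neg_zero,
    ← integral_comp_neg, neg_zero]
  congr 1
  have hconj : ∀ x, cexp (φ (-x) * I) = conjLIE (cexp (φ x * I)) := fun x => by
    rw [conjLIE_apply, ← exp_conj, map_mul, conj_ofReal, conj_I, hodd, ofReal_neg, mul_neg,
      neg_mul]
  simp_rw [hconj]
  exact conjLIE.toLinearIsometry.intervalIntegral_comp_comm _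

def airyPhase (t a ξ : ℝ) : ℝ := t * ξ ^ 3 + a * ξ

theorem hasDerivAt_airyPhase (t a ξ : ℝ) :
    HasDerivAt (airyPhase t a) (3 * t * ξ ^ 2 + a) ξ :=
  (((hasDerivAt_pow 3 ξ).const_mul t).add ((hasDerivAt_id' ξ).const_mul a)).congr_deriv
    (by push_cast; ring)

theorem airyPhase_neg (t a ξ : ℝ) : airyPhase t a (-ξ) = -airyPhase t a ξ := by
  unfold airyPhase; ring

theorem airyPhase_one_div_mul {t k : ℝ} (hk : k ^ 3 = t) (hk0 : k ≠ 0) (a ξ : ℝ) :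
    airyPhase 1 (a / k) (k * ξ) = airyPhase t a ξ := by
  unfold airyPhase; subst hk; field_simp

theorem cexp_I_mul_eq_cexp_airyPhase (t a ξ : ℝ) :
    cexp (I * (t * ξ ^ 3 + a * ξ)) = cexp (airyPhase t a ξ * I) := by
  rw [airyPhase, mul_comm]; push_cast; rfl

theorem norm_integral_cexp_airyPhase_one_le_of_nonneg (a : ℝ) {R : ℝ} (hR : 0 ≤ R) :
    ‖∫ s in 0..R, cexp (airyPhase 1 a s * I)‖ ≤ 5 := by
  -- `3 s ^ 2 + a ≥ 3` from `q` on, and `3 s ^ 2 + a ≤ -9` up to `q - 2`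
  set q := √(1 - a / 3)
  have hwindow : ∀ s ∈ Icc 0 R, s ∉ Ioo (q - 2) q → 3 ≤ |3 * 1 * s ^ 2 + a| := by
    intro s hs hsw
    rcases le_or_gt q s with hqs | hsq
    · have := (Real.sqrt_le_left hs.1).1 hqs
      exact le_abs.2 (Or.inl (by linarith))
    · have hs2 : s ≤ q - 2 := by by_contra h; exact hsw ⟨lt_of_not_ge h, hsq⟩
      have hq : q ^ 2 = 1 - a / 3 := Real.sq_sqrt (Real.sqrt_pos.1 (by linarith [hs.1])).le
      exact le_abs.2 (Or.inr (by nlinarith [hs.1]))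
  have := norm_integral_cexp_mul_I_le_of_le_abs_deriv_outside hR (by linarith)
    (by norm_num : (0 : ℝ) < 3) (fun s _ => hasDerivAt_airyPhase 1 a s)
    (fun s _ => ((hasDerivAt_pow 2 s).const_mul (3 * 1)).add_const a)
    (by fun_prop) (fun s hs => by have := hs.1; positivity) hwindow
  linarith

theorem norm_integral_symm_cexp_airyPhase_one_le (a : ℝ) {R : ℝ} (hR : 0 ≤ R) :
    ‖∫ s in -R..R, cexp (airyPhase 1 a s * I)‖ ≤ 10 := by
  rw [integral_cexp_mul_I_of_odd (by unfold airyPhase; fun_prop) (airyPhase_neg 1 a)]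
  refine (norm_add_le _ _).trans ?_
  rw [RCLike.norm_conj]
  linarith [norm_integral_cexp_airyPhase_one_le_of_nonneg a hR]

theorem norm_integral_symm_cexp_airyPhase_le {t : ℝ} (ht : 0 < t) (a : ℝ) {R : ℝ}
    (hR : 0 ≤ R) :
    ‖∫ ξ in -R..R, cexp (airyPhase t a ξ * I)‖ ≤ 10 * t ^ (-(1 : ℝ) / 3) := by
  set k := t ^ ((3 : ℕ)⁻¹ : ℝ)
  have hk : 0 < k := Real.rpow_pos_of_pos ht _
  have hk3 : k ^ 3 = t := Real.rpow_inv_natCast_pow ht.le three_ne_zero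
  have hkt : t ^ (-(1 : ℝ) / 3) = k⁻¹ := by
    rw [← Real.rpow_neg ht.le]; norm_num
  simp_rw [← airyPhase_one_div_mul hk3 hk.ne']
  rw [integral_comp_mul_left (fun s => cexp (airyPhase 1 (a / k) s * I)) hk.ne', norm_smul,
    mul_neg, hkt, norm_inv, Real.norm_of_nonneg hk.le, mul_comm]
  gcongr
  exact norm_integral_symm_cexp_airyPhase_one_le _ (by positivity)

theorem intervalIntegral_fourier_mul_cexp_airy_eq {u : ℝ → ℂ} (hu : Integrable u) (t x : ℝ)
    {c d : ℝ} (hcd : c ≤ d) :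
    ∫ ξ in c..d, (∫ y, u y * cexp (-I * y * ξ)) * cexp (I * (t * ξ ^ 3 + x * ξ)) =
      ∫ y, u y * ∫ ξ in c..d, cexp (airyPhase t (x - y) ξ * I) := by
  set μ := volume.restrict (Ioc c d)
  have hF : Integrable (fun p : ℝ × ℝ => u p.2 * cexp (airyPhase t (x - p.2) p.1 * I))
      (μ.prod volume) :=
    (hu.comp_snd μ).mul_bdd (by unfold airyPhase; fun_prop)
      (ae_of_all _ fun p => (norm_exp_ofReal_mul_I _).le)
  have hphase : ∀ ξ y : ℝ, u y * cexp (-I * y * ξ) * cexp (I * (t * ξ ^ 3 + x * ξ)) =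
      u y * cexp (airyPhase t (x - y) ξ * I) := fun ξ y => by
    rw [mul_assoc, ← Complex.exp_add, airyPhase]; push_cast; ring_nf
  simp_rw [integral_of_le hcd, ← MeasureTheory.integral_mul_const, hphase,
    ← MeasureTheory.integral_const_mul]
  exact integral_integral_swap (f := fun ξ y => u y * cexp (airyPhase t (x - y) ξ * I)) hF

theorem integrable_integral_mul_cexp_neg_I (u : SchwartzMap ℝ ℂ) :
    Integrable fun ξ : ℝ => ∫ y, u y * cexp (-I * y * ξ) := by
  -- this is `ξ ↦ 𝓕 u (ξ / 2π)`
  have h𝓕 : Integrable (FourierTransform.fourier (u : ℝ → ℂ)) := by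
    rw [← SchwartzMap.fourier_coe]; exact (FourierTransform.fourier u).integrable
  refine (h𝓕.comp_mul_right' (inv_ne_zero Real.two_pi_pos.ne')).congr (ae_of_all _ fun ξ => ?_)
  simp only [Real.fourier_real_eq_integral_exp_smul, smul_eq_mul]
  congr 1 with y
  rw [mul_comm]
  congr 2
  push_cast
  field_simp

theorem norm_intervalIntegral_airy_solution_le {u : ℝ → ℂ} (hu : Integrable u) {t : ℝ}
    (ht : 0 < t) (x : ℝ) {R : ℝ} (hR : 0 ≤ R) :
    ‖∫ ξ in -R..R, (((1 / (2 * Real.pi) : ℝ) : ℂ) * ∫ y, u y * cexp (-I * y * ξ)) *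
        cexp (I * (t * ξ ^ 3 + x * ξ))‖ ≤ 5 / Real.pi * t ^ (-(1 : ℝ) / 3) * ∫ y, ‖u y‖ := by
  simp_rw [mul_assoc (((1 / (2 * Real.pi) : ℝ) : ℂ))]
  rw [intervalIntegral.integral_const_mul,
    intervalIntegral_fourier_mul_cexp_airy_eq hu t x (by linarith),
    norm_mul, norm_real, Real.norm_of_nonneg (by positivity)]
  have hkernel : ‖∫ y, u y * ∫ ξ in -R..R, cexp (airyPhase t (x - y) ξ * I)‖ ≤
      ∫ y, ‖u y‖ * (10 * t ^ (-(1 : ℝ) / 3)) :=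
    norm_integral_le_of_norm_le (hu.norm.mul_const _) (ae_of_all _ fun y => by
      rw [norm_mul]; gcongr; exact norm_integral_symm_cexp_airyPhase_le ht _ hR)
  rw [MeasureTheory.integral_mul_const] at hkernel
  calc _ ≤ 1 / (2 * Real.pi) * ((∫ y, ‖u y‖) * (10 * t ^ (-(1 : ℝ) / 3))) := by gcongr
    _ = _ := by field_simp; ring

/-- Dispersive decay at rate `t^{-1/3}` for the Airy equation: for Schwartz data
`u₀`, the solution `u(t,x) = ∫ û₀(ξ) e^{i(tξ³ + xξ)} dξ`, with
`û₀(ξ) = (1/2π) ∫ u₀(y) e^{-iyξ} dy`, satisfies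
`sup_x |u(t,x)| ≤ C t^{-1/3} ∫ |u₀|` for all `t > 0`. -/
theorem airy_dispersive_decay :
    ∃ C : ℝ, 0 < C ∧
      ∀ u₀ : SchwartzMap ℝ ℂ, ∀ t : ℝ, 0 < t → ∀ x : ℝ,
        ‖(∫ ξ : ℝ,
            (((1 / (2 * Real.pi) : ℝ) : ℂ) *
                ∫ y : ℝ, u₀ y * Complex.exp (-Complex.I * (y : ℂ) * (ξ : ℂ))) *
              Complex.exp (Complex.I * ((t : ℂ) * (ξ : ℂ) ^ 3 + (x : ℂ) * (ξ : ℂ))))‖ ≤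
          C * t ^ (-(1 : ℝ) / 3) * ∫ y : ℝ, ‖u₀ y‖ := by
  refine ⟨5 / Real.pi, by positivity, fun u₀ t ht x => ?_⟩
  have hint : Integrable fun ξ : ℝ => (((1 / (2 * Real.pi) : ℝ) : ℂ) *
      ∫ y, u₀ y * cexp (-I * y * ξ)) * cexp (I * (t * ξ ^ 3 + x * ξ)) :=
    ((integrable_integral_mul_cexp_neg_I u₀).const_mul _).mul_bdd (c := 1) (by fun_prop)
      (ae_of_all _ fun ξ => by rw [cexp_I_mul_eq_cexp_airyPhase, norm_exp_ofReal_mul_I])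
  refine le_of_tendsto (intervalIntegral_tendsto_integral hint tendsto_neg_atTop_atBot
    tendsto_id).norm (eventually_ge_atTop 0 |>.mono fun R hR => ?_)
  exact norm_intervalIntegral_airy_solution_le u₀.integrable ht x hR
end
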